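/- The extensionality axiom is sound for extensional epsilon semantics: for all 𝔐, extensional choice functions Φ, and assignments s, if A(d) ↔ B(d) holds in 𝔐,Φ where d = val(𝔐,Φ,s, εx.¬(A(x)↔B(x))), then val(𝔐,Φ,s, εx.A(x)) = val(𝔐,Φ,s, εx.B(x)). -/
import Mathlib


/- Syntax of the epsilon calculus -/
mutual
inductive Tm : Type where
  | var : ℕ → Tm
  | fn : ℕ → List Tm → Tm
  | eps : ℕ → Fm → Tm
inductive Fm : Type where
  | pred : ℕ → List Tm → Fm
  | eq : Tm → Tm → Fm
  | bot : Fm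
  | top : Fm
  | not : Fm → Fm
  | and : Fm → Fm → Fm
  | or : Fm → Fm → Fm
  | imp : Fm → Fm → Fm
  | iff : Fm → Fm → Fm
  | all : ℕ → Fm → Fm
  | ex : ℕ → Fm → Fm
end

/- Free variables -/
mutual
def freeTm : Tm → Finset ℕ
  | .var x => {x}
  | .fn _ ts => freeL ts
  | .eps x A => (freeFm A).erase x
def freeL : List Tm → Finset ℕ
  | [] => ∅
  | t :: ts => freeTm t ∪ freeL ts
def freeFm : Fm → Finset ℕ
  | .pred _ ts => freeL ts
  | .eq t u => freeTm t ∪ freeTm u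
  | .bot => ∅
  | .top => ∅
  | .not A => freeFm A
  | .and A B => freeFm A ∪ freeFm B
  | .or A B => freeFm A ∪ freeFm B
  | .imp A B => freeFm A ∪ freeFm B
  | .iff A B => freeFm A ∪ freeFm B
  | .all x A => (freeFm A).erase x
  | .ex x A => (freeFm A).erase x
end

/- Simultaneous substitution (of terms for free variables) -/
mutual
def ssubTm (σ : ℕ → Tm) : Tm → Tm
  | .var x => σ x
  | .fn f ts => .fn f (ssubL σ ts)
  | .eps x A => .eps x (ssubFm (Function.update σ x (.var x)) A)
def ssubL (σ : ℕ → Tm) : List Tm → List Tm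
  | [] => []
  | t :: ts => ssubTm σ t :: ssubL σ ts
def ssubFm (σ : ℕ → Tm) : Fm → Fm
  | .pred P ts => .pred P (ssubL σ ts)
  | .eq t u => .eq (ssubTm σ t) (ssubTm σ u)
  | .bot => .bot
  | .top => .top
  | .not A => .not (ssubFm σ A)
  | .and A B => .and (ssubFm σ A) (ssubFm σ B)
  | .or A B => .or (ssubFm σ A) (ssubFm σ B)
  | .imp A B => .imp (ssubFm σ A) (ssubFm σ B)
  | .iff A B => .iff (ssubFm σ A) (ssubFm σ B)
  | .all x A => .all x (ssubFm (Function.update σ x (.var x)) A)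
  | .ex x A => .ex x (ssubFm (Function.update σ x (.var x)) A)
end

/-- Substitution of a single term `u` for the free variable `x`. -/
def substTm (t : Tm) (x : ℕ) (u : Tm) : Tm :=
  ssubTm (fun y => if y = x then u else .var y) t
def substFm (A : Fm) (x : ℕ) (u : Tm) : Fm :=
  ssubFm (fun y => if y = x then u else .var y) A

/- Alpha-equivalence (syntactic identity up to renaming of bound variables) -/
mutual
inductive AeqTm : Tm → Tm → Prop where
  | var (x) : AeqTm (.var x) (.var x)
  | fn (f) {ts us} : AeqL ts us → AeqTm (.fn f ts) (.fn f us)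
  | eps {x y A B} :
      (∀ z, z ∉ freeFm A → z ∉ freeFm B →
        AeqFm (substFm A x (.var z)) (substFm B y (.var z))) →
      AeqTm (.eps x A) (.eps y B)
inductive AeqL : List Tm → List Tm → Prop where
  | nil : AeqL [] []
  | cons {t u ts us} : AeqTm t u → AeqL ts us → AeqL (t :: ts) (u :: us)
inductive AeqFm : Fm → Fm → Prop where
  | pred (P) {ts us} : AeqL ts us → AeqFm (.pred P ts) (.pred P us)
  | eq {t t' u u'} : AeqTm t t' → AeqTm u u' → AeqFm (.eq t u) (.eq t' u')
  | bot : AeqFm .bot .bot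
  | top : AeqFm .top .top
  | not {A B} : AeqFm A B → AeqFm (.not A) (.not B)
  | and {A A' B B'} : AeqFm A A' → AeqFm B B' → AeqFm (.and A B) (.and A' B')
  | or {A A' B B'} : AeqFm A A' → AeqFm B B' → AeqFm (.or A B) (.or A' B')
  | imp {A A' B B'} : AeqFm A A' → AeqFm B B' → AeqFm (.imp A B) (.imp A' B')
  | iff {A A' B B'} : AeqFm A A' → AeqFm B B' → AeqFm (.iff A B) (.iff A' B')
  | all {x y A B} :
      (∀ z, z ∉ freeFm A → z ∉ freeFm B →
        AeqFm (substFm A x (.var z)) (substFm B y (.var z))) →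
      AeqFm (.all x A) (.all y B)
  | ex {x y A B} :
      (∀ z, z ∉ freeFm A → z ∉ freeFm B →
        AeqFm (substFm A x (.var z)) (substFm B y (.var z))) →
      AeqFm (.ex x A) (.ex y B)
end

/- Subterms (per the paper: t is a subterm of E iff E ≡ E'(x)[x/t]) -/
def IsSubTm (t u : Tm) : Prop :=
  ∃ (u' : Tm) (x : ℕ), x ∈ freeTm u' ∧ AeqTm u (substTm u' x t)
def IsSubFm (t : Tm) (A : Fm) : Prop :=
  ∃ (A' : Fm) (x : ℕ), x ∈ freeFm A' ∧ AeqFm A (substFm A' x t)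
def IsProperSubTm (t u : Tm) : Prop := IsSubTm t u ∧ ¬ AeqTm t u
/-- `t` is an immediate subterm of `u`: a subterm of `u` that is not a
subterm of any proper subterm of `u`. -/
def ImmSubTm (t u : Tm) : Prop :=
  IsSubTm t u ∧ ∀ v, IsProperSubTm v u → ¬ IsSubTm t v

/- The list of free-variable occurrences of a term, from left to right. -/
mutual
def fvOccsTm : Tm → List ℕ
  | .var x => [x]
  | .fn _ ts => fvOccsL ts
  | .eps x A => (fvOccsFm A).filter (· ≠ x)
def fvOccsL : List Tm → List ℕ
  | [] => []
  | t :: ts => fvOccsTm t ++ fvOccsL ts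
def fvOccsFm : Fm → List ℕ
  | .pred _ ts => fvOccsL ts
  | .eq t u => fvOccsTm t ++ fvOccsTm u
  | .bot => []
  | .top => []
  | .not A => fvOccsFm A
  | .and A B => fvOccsFm A ++ fvOccsFm B
  | .or A B => fvOccsFm A ++ fvOccsFm B
  | .imp A B => fvOccsFm A ++ fvOccsFm B
  | .iff A B => fvOccsFm A ++ fvOccsFm B
  | .all x A => (fvOccsFm A).filter (· ≠ x)
  | .ex x A => (fvOccsFm A).filter (· ≠ x)
end

/- "u is free for x in E" -/
mutual
def ffTm (u : Tm) (x : ℕ) : Tm → Prop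
  | .var _ => True
  | .fn _ ts => ffL u x ts
  | .eps y A => x ∉ freeTm (Tm.eps y A) ∨ (y ∉ freeTm u ∧ ffFm u x A)
def ffL (u : Tm) (x : ℕ) : List Tm → Prop
  | [] => True
  | t :: ts => ffTm u x t ∧ ffL u x ts
def ffFm (u : Tm) (x : ℕ) : Fm → Prop
  | .pred _ ts => ffL u x ts
  | .eq t s => ffTm u x t ∧ ffTm u x s
  | .bot => True
  | .top => True
  | .not A => ffFm u x A
  | .and A B => ffFm u x A ∧ ffFm u x B
  | .or A B => ffFm u x A ∧ ffFm u x B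
  | .imp A B => ffFm u x A ∧ ffFm u x B
  | .iff A B => ffFm u x A ∧ ffFm u x B
  | .all y A => x ∉ freeFm (Fm.all y A) ∨ (y ∉ freeTm u ∧ ffFm u x A)
  | .ex y A => x ∉ freeFm (Fm.ex y A) ∨ (y ∉ freeTm u ∧ ffFm u x A)
end

/- Rank of ε-terms.  `srkTm x t` is the maximum rank of an ε-term
occurring in `t` which contains `x` free (0 if there is none). -/
mutual
def rkTm : Tm → ℕ
  | .var _ => 0
  | .fn _ _ => 0
  | .eps x A => srkFm x A + 1
def srkTm : ℕ → Tm → ℕ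
  | _, .var _ => 0
  | x, .fn _ ts => srkL x ts
  | x, .eps y A =>
      max (if x ∈ freeTm (Tm.eps y A) then srkFm y A + 1 else 0) (srkFm x A)
def srkL : ℕ → List Tm → ℕ
  | _, [] => 0
  | x, t :: ts => max (srkTm x t) (srkL x ts)
def srkFm : ℕ → Fm → ℕ
  | x, .pred _ ts => srkL x ts
  | x, .eq t u => max (srkTm x t) (srkTm x u)
  | _, .bot => 0
  | _, .top => 0
  | x, .not A => srkFm x A
  | x, .and A B => max (srkFm x A) (srkFm x B)
  | x, .or A B => max (srkFm x A) (srkFm x B)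
  | x, .imp A B => max (srkFm x A) (srkFm x B)
  | x, .iff A B => max (srkFm x A) (srkFm x B)
  | x, .all _ A => srkFm x A
  | x, .ex _ A => srkFm x A
end

/- ε-free and quantifier-free expressions -/
mutual
def epsFreeTm : Tm → Prop
  | .var _ => True
  | .fn _ ts => epsFreeL ts
  | .eps _ _ => False
def epsFreeL : List Tm → Prop
  | [] => True
  | t :: ts => epsFreeTm t ∧ epsFreeL ts
def epsFreeFm : Fm → Prop
  | .pred _ ts => epsFreeL ts
  | .eq t u => epsFreeTm t ∧ epsFreeTm u
  | .bot => True
  | .top => True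
  | .not A => epsFreeFm A
  | .and A B => epsFreeFm A ∧ epsFreeFm B
  | .or A B => epsFreeFm A ∧ epsFreeFm B
  | .imp A B => epsFreeFm A ∧ epsFreeFm B
  | .iff A B => epsFreeFm A ∧ epsFreeFm B
  | .all _ A => epsFreeFm A
  | .ex _ A => epsFreeFm A
end
mutual
def qFreeTm : Tm → Prop
  | .var _ => True
  | .fn _ ts => qFreeL ts
  | .eps _ A => qFreeFm A
def qFreeL : List Tm → Prop
  | [] => True
  | t :: ts => qFreeTm t ∧ qFreeL ts
def qFreeFm : Fm → Prop
  | .pred _ ts => qFreeL ts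
  | .eq t u => qFreeTm t ∧ qFreeTm u
  | .bot => True
  | .top => True
  | .not A => qFreeFm A
  | .and A B => qFreeFm A ∧ qFreeFm B
  | .or A B => qFreeFm A ∧ qFreeFm B
  | .imp A B => qFreeFm A ∧ qFreeFm B
  | .iff A B => qFreeFm A ∧ qFreeFm B
  | .all _ _ => False
  | .ex _ _ => False
end

/- Propositional tautologies: true under every assignment of truth values
to formulas, where the connectives and constants are interpreted as usual
and all other formulas are treated as atoms. -/
def evalP (v : Fm → Prop) : Fm → Prop
  | .bot => False
  | .top => True
  | .not A => ¬ evalP v A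
  | .and A B => evalP v A ∧ evalP v B
  | .or A B => evalP v A ∨ evalP v B
  | .imp A B => evalP v A → evalP v B
  | .iff A B => evalP v A ↔ evalP v B
  | A => v A
def Taut (A : Fm) : Prop := ∀ v : Fm → Prop, evalP v A

/- Calculi: flags for identity axioms, critical formulas, extensionality,
and quantifiers. -/
structure Calc where
  eqAx : Bool
  crit : Bool
  ext : Bool
  quant : Bool

def EC : Calc := ⟨false, false, false, false⟩          -- elementary calculus (no identity)
def ECeq : Calc := ⟨true, false, false, false⟩          -- elementary calculus with identity
def ECe : Calc := ⟨true, true, false, false⟩            -- epsilon calculus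
def ECeNoEq : Calc := ⟨false, true, false, false⟩       -- epsilon calculus without identity
def ECeExt : Calc := ⟨true, true, true, false⟩          -- extensional epsilon calculus
def ECeQ : Calc := ⟨true, true, false, true⟩            -- extended epsilon calculus
def ECeQNoEq : Calc := ⟨false, true, false, true⟩       -- extended epsilon calculus without identity

/-- The extensionality axiom (ext), i.e. the ε-translation of
∀x(A(x) ↔ B(x)) → εx.A(x) = εx.B(x). -/
def extAx (x : ℕ) (A B : Fm) : Fm :=
  let e := Tm.eps x (.not (.iff A B))
  .imp (.iff (substFm A x e) (substFm B x e)) (.eq (.eps x A) (.eps x B))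

def IsAxiom (S : Calc) (F : Fm) : Prop :=
  Taut F ∨
  (S.eqAx = true ∧ ((∃ t, F = .eq t t) ∨
    (∃ t u A x, ffFm t x A ∧ ffFm u x A ∧
      F = .imp (.eq t u) (.iff (substFm A x t) (substFm A x u))))) ∨
  (S.crit = true ∧ ∃ A x t, ffFm t x A ∧ ffFm (Tm.eps x A) x A ∧
      F = .imp (substFm A x t) (substFm A x (.eps x A))) ∨
  (S.ext = true ∧ ∃ A B x, F = extAx x A B) ∨
  (S.quant = true ∧ ∃ A x t, ffFm t x A ∧
      (F = .imp (substFm A x t) (.ex x A) ∨ F = .imp (.all x A) (substFm A x t)))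

/-- The eigenvariable condition: `x` does not occur free in line `i`
or in any line below it. -/
def Eigen (x : ℕ) (L : List Fm) (i : ℕ) : Prop :=
  ∀ k (hk : k < L.length), i ≤ k → x ∉ freeFm (L.get ⟨k, hk⟩)

/-- Line `i` of `L` is justified: it is in Γ, an axiom, or follows from
earlier lines by modus ponens or (if permitted) the quantifier rules R∃, R∀
(with the eigenvariable condition). -/
def Justified (S : Calc) (Γ : Set Fm) (L : List Fm) (i : ℕ) (hi : i < L.length) : Prop :=
  L.get ⟨i, hi⟩ ∈ Γ ∨ IsAxiom S (L.get ⟨i, hi⟩) ∨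
  (∃ j, ∃ k, ∃ hj : j < L.length, ∃ hk : k < L.length, j < i ∧ k < i ∧
    L.get ⟨k, hk⟩ = .imp (L.get ⟨j, hj⟩) (L.get ⟨i, hi⟩)) ∨
  (S.quant = true ∧ ∃ j, ∃ hj : j < L.length, j < i ∧ ∃ x B C,
    ((L.get ⟨j, hj⟩ = .imp B C ∧ L.get ⟨i, hi⟩ = .imp (.ex x B) C) ∨
     (L.get ⟨j, hj⟩ = .imp C B ∧ L.get ⟨i, hi⟩ = .imp C (.all x B))) ∧
    Eigen x L i)

/-- `L` is a proof from the set of hypotheses `Γ` in the calculus `S`. -/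
def IsProofFrom (S : Calc) (Γ : Set Fm) (L : List Fm) : Prop :=
  ∀ i (hi : i < L.length), Justified S Γ L i hi

/-- `L` is a proof of `A` from `Γ` in `S`. -/
def ProvesL (S : Calc) (Γ : Set Fm) (L : List Fm) (A : Fm) : Prop :=
  IsProofFrom S Γ L ∧ L.getLast? = some A

def Provable (S : Calc) (Γ : Set Fm) (A : Fm) : Prop := ∃ L, ProvesL S Γ L A

/-- `x` occurs as the variable of an application of R∃ or R∀ in `L`. -/
def IsEigenVar (x : ℕ) (L : List Fm) : Prop :=
  ∃ i, ∃ hi : i < L.length, ∃ j, ∃ hj : j < L.length, j < i ∧ ∃ B C,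
    ((L.get ⟨j, hj⟩ = .imp B C ∧ L.get ⟨i, hi⟩ = .imp (.ex x B) C) ∨
     (L.get ⟨j, hj⟩ = .imp C B ∧ L.get ⟨i, hi⟩ = .imp C (.all x B)))

/- Substitution instances -/
inductive InstOf : Fm → Fm → Prop where
  | refl (A) : InstOf A A
  | step {B A} (x : ℕ) (t : Tm) : InstOf B A → InstOf (substFm B x t) A

/-- The set of substitution instances of members of `Γ`. -/
def Inst (Γ : Set Fm) : Set Fm := {B | ∃ A ∈ Γ, InstOf B A}

/-- A sentence is a closed formula. -/
def Sentence (A : Fm) : Prop := freeFm A = ∅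

/- Critical ε-terms of a proof, rank of a proof, the r-order of a proof -/
def CritFor (e : Tm) (F : Fm) : Prop :=
  ∃ A x t, e = Tm.eps x A ∧ F = .imp (substFm A x t) (substFm A x (.eps x A))
def IsCriticalIn (e : Tm) (L : List Fm) : Prop := ∃ F ∈ L, CritFor e F
/-- The rank of a proof: the maximal rank of its critical ε-terms. -/
noncomputable def prfRank (L : List Fm) : ℕ :=
  sSup {r | ∃ e, IsCriticalIn e L ∧ rkTm e = r}
/-- The collection of alpha-equivalence classes of critical ε-terms of
rank `r` in `L`; its cardinality is the `r`-order o(L, r). -/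
def critClasses (L : List Fm) (r : ℕ) : Set (Set Tm) :=
  {s | ∃ e, IsCriticalIn e L ∧ rkTm e = r ∧ s = {e' | AeqTm e e'}}

/- Semantics -/
structure StrucOn (D : Type) where
  dne : Nonempty D
  fns : ℕ → List D → D
  preds : ℕ → List D → Prop

/-- An extensional choice function on the domain `D`. -/
def IsChoice {D : Type} (Φ : Set D → D) : Prop :=
  ∀ X : Set D, X.Nonempty → Φ X ∈ X

mutual
def val {D : Type} (M : StrucOn D) (Φ : Set D → D) (s : ℕ → D) : Tm → D
  | .var x => s x
  | .fn f ts => M.fns f (valL M Φ s ts)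
  | .eps x A => Φ {m | sat M Φ (Function.update s x m) A}
def valL {D : Type} (M : StrucOn D) (Φ : Set D → D) (s : ℕ → D) : List Tm → List D
  | [] => []
  | t :: ts => val M Φ s t :: valL M Φ s ts
def sat {D : Type} (M : StrucOn D) (Φ : Set D → D) (s : ℕ → D) : Fm → Prop
  | .pred P ts => M.preds P (valL M Φ s ts)
  | .eq t u => val M Φ s t = val M Φ s u
  | .bot => False
  | .top => True
  | .not A => ¬ sat M Φ s A
  | .and A B => sat M Φ s A ∧ sat M Φ s B
  | .or A B => sat M Φ s A ∨ sat M Φ s B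
  | .imp A B => sat M Φ s A → sat M Φ s B
  | .iff A B => sat M Φ s A ↔ sat M Φ s B
  | .all x A => ∀ m, sat M Φ (Function.update s x m) A
  | .ex x A => ∃ m, sat M Φ (Function.update s x m) A
end

/- The ε-translation -/
mutual
def epsTm : Tm → Tm
  | .var x => .var x
  | .fn f ts => .fn f (epsL ts)
  | .eps x A => .eps x (epsFm A)
def epsL : List Tm → List Tm
  | [] => []
  | t :: ts => epsTm t :: epsL ts
def epsFm : Fm → Fm
  | .pred P ts => .pred P (epsL ts)
  | .eq t u => .eq (epsTm t) (epsTm u)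
  | .bot => .bot
  | .top => .top
  | .not A => .not (epsFm A)
  | .and A B => .and (epsFm A) (epsFm B)
  | .or A B => .or (epsFm A) (epsFm B)
  | .imp A B => .imp (epsFm A) (epsFm B)
  | .iff A B => .iff (epsFm A) (epsFm B)
  | .ex x A => substFm (epsFm A) x (.eps x (epsFm A))
  | .all x A => substFm (epsFm A) x (.eps x (.not (epsFm A)))
end

/- Replacement of every occurrence of the term `e` by `u` -/
open Classical in
mutual
noncomputable def replTm (e u : Tm) : Tm → Tm
  | .var x => if Tm.var x = e then u else .var x
  | .fn f ts => if Tm.fn f ts = e then u else .fn f (replL e u ts)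
  | .eps x A => if Tm.eps x A = e then u else .eps x (replFm e u A)
noncomputable def replL (e u : Tm) : List Tm → List Tm
  | [] => []
  | t :: ts => replTm e u t :: replL e u ts
noncomputable def replFm (e u : Tm) : Fm → Fm
  | .pred P ts => .pred P (replL e u ts)
  | .eq t s => .eq (replTm e u t) (replTm e u s)
  | .bot => .bot
  | .top => .top
  | .not A => .not (replFm e u A)
  | .and A B => .and (replFm e u A) (replFm e u B)
  | .or A B => .or (replFm e u A) (replFm e u B)
  | .imp A B => .imp (replFm e u A) (replFm e u B)
  | .iff A B => .iff (replFm e u A) (replFm e u B)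
  | .all x A => .all x (replFm e u A)
  | .ex x A => .ex x (replFm e u A)
end

/-- Disjunction of a list of formulas. -/
def disj : List Fm → Fm
  | [] => .bot
  | [A] => A
  | A :: B :: rest => .or A (disj (B :: rest))

/- Term model ingredients -/
/-- The equivalence class of `t` under Γ-provable identity. -/
def cls (Γ : Set Fm) (t : Tm) : Set Tm := {u | Fm.eq t u ∈ Γ}
/-- `T` (a set of equivalence classes) is represented by the formula `A`
with free variable `x`: T = { t̃ : A(t) ∈ Γ }. -/
def RepBy (Γ : Set Fm) (T : Set (Set Tm)) (A : Fm) (x : ℕ) : Prop :=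
  T = {S | ∃ t, substFm A x t ∈ Γ ∧ S = cls Γ t}
/-- The domain of the term model: equivalence classes of terms. -/
def ClassD (Γ : Set Fm) : Type := {S : Set Tm // ∃ t, S = cls Γ t}
def mkCls (Γ : Set Fm) (t : Tm) : ClassD Γ := ⟨cls Γ t, t, rfl⟩

/-- `p` (an ε-term with free variables `xs`) is a type of the ε-term `e`:
(1) `e` is obtained from `p` by substituting terms for the `xs`;
(2) the free variables of `p` are exactly the `xs`;
(3) each of the `xs` is an immediate subterm of `p`;
(4,5) each of the `xs` occurs exactly once in `p`, in the order listed. -/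
def IsTypeOf (p : Tm) (xs : List ℕ) (e : Tm) : Prop :=
  (∃ x B, p = Tm.eps x B) ∧
  (∃ σ : ℕ → Tm, (∀ y, y ∉ xs → σ y = .var y) ∧ AeqTm e (ssubTm σ p)) ∧
  freeTm p = xs.toFinset ∧
  (∀ xi ∈ xs, ImmSubTm (.var xi) p) ∧
  fvOccsTm p = xs

/-- Soundness of the extensionality axiom: if A(d) ↔ B(d)
holds where d = val(𝔐,Φ,s, εx.¬(A(x)↔B(x))), then
val(𝔐,Φ,s, εx.A(x)) = val(𝔐,Φ,s, εx.B(x)). -/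
theorem ext_sound {D : Type} (M : StrucOn D) (Φ : Set D → D)
    (hΦ : IsChoice Φ) (s : ℕ → D) (x : ℕ) (A B : Fm) (d : D)
    (hd : d = val M Φ s (Tm.eps x (.not (.iff A B))))
    (h : sat M Φ (Function.update s x d) A ↔ sat M Φ (Function.update s x d) B) :
    val M Φ s (Tm.eps x A) = val M Φ s (Tm.eps x B) := by
  have hall : ∀ m, sat M Φ (Function.update s x m) A ↔ sat M Φ (Function.update s x m) B := by
    by_contra hne
    push_neg at hne
    obtain ⟨m, hm⟩ := hne
    have hne' : Set.Nonempty {m | sat M Φ (Function.update s x m) (Fm.not (.iff A B))} := by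
      refine ⟨m, ?_⟩
      simp only [Set.mem_setOf_eq, sat]
      tauto
    have hmem := hΦ _ hne'
    rw [hd] at h
    simp only [val] at h
    simp only [Set.mem_setOf_eq, sat] at hmem
    exact hmem h
  simp only [val]
  congr 1
  ext m
  simp only [Set.mem_setOf_eq]
  exact hall m
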